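/- arXiv:1010.4976 — 2 statements merged into one kernel-verified Lean document; each statement's English description precedes it below -/
import Mathlib

section
/- Let k be a field of characteristic zero, A a bialgebra over k, and f : A ⊗ A → k a Hochschild 2-cocycle with f(1 ⊗ a) = 0 = f(a ⊗ 1) for all a ∈ A, which is nilpotent in the convolution algebra of linear maps A⊗A → k (i.e. f^{*n} = 0 for some n). Assume that f∘(id⊗m) commutes with ε⊗f and that f∘(m⊗id) commutes with f⊗ε, with respect to the convolution product on linear maps A⊗A⊗A → k. Then e^f := Σ_{n≥0} f^{*n}/n! (a finite sum by nilpotency) is a normalized multiplicative 2-cocycle on A, convolution invertible with inverse e^{−f}, and its lowest-order nonconstant term is f. -/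
open TensorProduct

universe u

/-- The convolution product of two linear maps from a coalgebra to an algebra. -/
noncomputable def conv {k C B : Type*} [CommRing k]
    [AddCommGroup C] [Module k C] [Coalgebra k C]
    [Ring B] [Algebra k B] (f g : C →ₗ[k] B) : C →ₗ[k] B :=
  LinearMap.mul' k B ∘ₗ TensorProduct.map f g ∘ₗ Coalgebra.comul

section

variable {k A : Type u} [Field k] [Ring A] [Bialgebra k A]

/-- Convolution powers of a linear functional on the coalgebra `A ⊗ A`; the zeroth power
is the convolution unit `ε_{A⊗A}`. -/
noncomputable def convPow (f : A ⊗[k] A →ₗ[k] k) : ℕ → (A ⊗[k] A →ₗ[k] k)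
  | 0 => Coalgebra.counit
  | n + 1 => conv f (convPow f n)

/-- The (truncated) convolution exponential `Σ_{n<N} f^{*n}/n!`. -/
noncomputable def expConv (f : A ⊗[k] A →ₗ[k] k) (N : ℕ) : A ⊗[k] A →ₗ[k] k :=
  ∑ n ∈ Finset.range N, ((n.factorial : k)⁻¹) • convPow f n

/-- `ε⊗f : x⊗(y⊗z) ↦ ε(x)f(y⊗z)`. -/
noncomputable def epsTensor (f : A ⊗[k] A →ₗ[k] k) : A ⊗[k] (A ⊗[k] A) →ₗ[k] k :=
  LinearMap.mul' k k ∘ₗ TensorProduct.map (Coalgebra.counit : A →ₗ[k] k) f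

/-- `f⊗ε : x⊗(y⊗z) ↦ f(x⊗y)ε(z)`. -/
noncomputable def tensorEps (f : A ⊗[k] A →ₗ[k] k) : A ⊗[k] (A ⊗[k] A) →ₗ[k] k :=
  LinearMap.mul' k k ∘ₗ TensorProduct.map f (Coalgebra.counit : A →ₗ[k] k)
    ∘ₗ (TensorProduct.assoc k A A A).symm.toLinearMap

/-- `f∘(id⊗m) : x⊗(y⊗z) ↦ f(x ⊗ yz)`. -/
noncomputable def fIdMul (f : A ⊗[k] A →ₗ[k] k) : A ⊗[k] (A ⊗[k] A) →ₗ[k] k :=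
  f ∘ₗ TensorProduct.map LinearMap.id (LinearMap.mul' k A)

/-- `f∘(m⊗id) : x⊗(y⊗z) ↦ f(xy ⊗ z)`. -/
noncomputable def fMulId (f : A ⊗[k] A →ₗ[k] k) : A ⊗[k] (A ⊗[k] A) →ₗ[k] k :=
  f ∘ₗ TensorProduct.map (LinearMap.mul' k A) LinearMap.id
    ∘ₗ (TensorProduct.assoc k A A A).symm.toLinearMap


end

section ConvRing

variable {k : Type u} [Field k] {C : Type u} [AddCommGroup C] [Module k C] [Coalgebra k C]

lemma conv_counit_left (f : C →ₗ[k] k) : conv Coalgebra.counit f = f := by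
  ext a
  simp only [conv, LinearMap.comp_apply, ← LinearMap.lTensor_comp_rTensor,
    Coalgebra.rTensor_counit_comul, LinearMap.lTensor_tmul, LinearMap.mul'_apply, one_mul]

lemma conv_counit_right (f : C →ₗ[k] k) : conv f Coalgebra.counit = f := by
  ext a
  simp only [conv, LinearMap.comp_apply, ← LinearMap.rTensor_comp_lTensor,
    Coalgebra.lTensor_counit_comul, LinearMap.rTensor_tmul, LinearMap.mul'_apply, mul_one]

lemma conv_assoc (f g h : C →ₗ[k] k) : conv (conv f g) h = conv f (conv g h) := by
  have auxL : TensorProduct.map (conv f g) h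
      = TensorProduct.map (LinearMap.mul' k k) LinearMap.id
        ∘ₗ TensorProduct.map (TensorProduct.map f g) h
        ∘ₗ (Coalgebra.comul (R := k) (A := C)).rTensor C := by
    apply TensorProduct.ext'
    intro x y
    simp [conv]
  have auxR : TensorProduct.map f (conv g h)
      = TensorProduct.map LinearMap.id (LinearMap.mul' k k)
        ∘ₗ TensorProduct.map f (TensorProduct.map g h)
        ∘ₗ (Coalgebra.comul (R := k) (A := C)).lTensor C := by
    apply TensorProduct.ext'
    intro x y
    simp [conv]
  have key : (LinearMap.mul' k k) ∘ₗ (TensorProduct.map (LinearMap.mul' k k) LinearMap.id)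
        ∘ₗ (TensorProduct.map (TensorProduct.map f g) h)
      = ((LinearMap.mul' k k) ∘ₗ (TensorProduct.map LinearMap.id (LinearMap.mul' k k))
        ∘ₗ (TensorProduct.map f (TensorProduct.map g h)))
        ∘ₗ (TensorProduct.assoc k C C C).toLinearMap := by
    apply TensorProduct.ext_threefold
    intro x y z
    simp [mul_assoc]
  ext a
  show LinearMap.mul' k k ((TensorProduct.map (conv f g) h) (Coalgebra.comul a))
      = LinearMap.mul' k k ((TensorProduct.map f (conv g h)) (Coalgebra.comul a))
  rw [auxL, auxR]
  simp only [LinearMap.comp_apply]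
  rw [← Coalgebra.coassoc_apply]
  exact LinearMap.congr_fun key ((Coalgebra.comul (R := k) (A := C)).rTensor C (Coalgebra.comul a))

lemma conv_add_left (f g h : C →ₗ[k] k) : conv (f + g) h = conv f h + conv g h := by
  simp only [conv, TensorProduct.map_add_left, LinearMap.add_comp, LinearMap.comp_add]

lemma conv_add_right (f g h : C →ₗ[k] k) : conv f (g + h) = conv f g + conv f h := by
  simp only [conv, TensorProduct.map_add_right, LinearMap.add_comp, LinearMap.comp_add]

lemma conv_smul_left (c : k) (f g : C →ₗ[k] k) : conv (c • f) g = c • conv f g := by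
  simp only [conv, TensorProduct.map_smul_left, LinearMap.smul_comp, LinearMap.comp_smul]

lemma conv_smul_right (c : k) (f g : C →ₗ[k] k) : conv f (c • g) = c • conv f g := by
  simp only [conv, TensorProduct.map_smul_right, LinearMap.smul_comp, LinearMap.comp_smul]

lemma conv_zero_left (g : C →ₗ[k] k) : conv (0 : C →ₗ[k] k) g = 0 := by
  have := conv_smul_left (0 : k) (0 : C →ₗ[k] k) g
  simpa using this

lemma conv_zero_right (f : C →ₗ[k] k) : conv f (0 : C →ₗ[k] k) = 0 := by
  have := conv_smul_right (0 : k) f (0 : C →ₗ[k] k)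
  simpa using this

noncomputable instance convRing : Ring (C →ₗ[k] k) where
  __ := (inferInstance : AddCommGroup (C →ₗ[k] k))
  mul := conv
  one := Coalgebra.counit
  mul_assoc := conv_assoc
  one_mul := conv_counit_left
  mul_one := conv_counit_right
  left_distrib := conv_add_right
  right_distrib := fun f g h => conv_add_left f g h
  zero_mul := conv_zero_left
  mul_zero := conv_zero_right

lemma conv_eq_mul (f g : C →ₗ[k] k) : conv f g = f * g := rfl

lemma one_eq_counit : (1 : C →ₗ[k] k) = Coalgebra.counit := rfl

instance : IsScalarTower k (C →ₗ[k] k) (C →ₗ[k] k) :=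
  ⟨fun c f g => by
    show (c • f) * g = c • (f * g)
    rw [← conv_eq_mul, ← conv_eq_mul, conv_smul_left]⟩

instance : SMulCommClass k (C →ₗ[k] k) (C →ₗ[k] k) :=
  ⟨fun c f g => by
    show c • (f * g) = f * (c • g)
    rw [← conv_eq_mul, ← conv_eq_mul, conv_smul_right]⟩

end ConvRing

section Pullback

variable {k : Type u} [Field k] {C D : Type u}
  [AddCommGroup C] [Module k C] [Coalgebra k C]
  [AddCommGroup D] [Module k D] [Coalgebra k D]

lemma conv_comp (φ : D →ₗc[k] C) (f g : C →ₗ[k] k) :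
    conv f g ∘ₗ (φ : D →ₗ[k] C) = conv (f ∘ₗ (φ : D →ₗ[k] C)) (g ∘ₗ (φ : D →ₗ[k] C)) := by
  unfold conv
  rw [TensorProduct.map_comp]
  simp only [LinearMap.comp_assoc]
  rw [← CoalgHomClass.map_comp_comul φ]

lemma mul_comp (φ : D →ₗc[k] C) (f g : C →ₗ[k] k) :
    (f * g) ∘ₗ (φ : D →ₗ[k] C) = (f ∘ₗ (φ : D →ₗ[k] C)) * (g ∘ₗ (φ : D →ₗ[k] C)) := by
  rw [← conv_eq_mul, ← conv_eq_mul, conv_comp]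

lemma one_comp (φ : D →ₗc[k] C) :
    (1 : C →ₗ[k] k) ∘ₗ (φ : D →ₗ[k] C) = (1 : D →ₗ[k] k) := by
  rw [one_eq_counit, one_eq_counit]
  exact CoalgHom.counit_comp φ

lemma pow_comp (φ : D →ₗc[k] C) (f : C →ₗ[k] k) (n : ℕ) :
    (f ^ n) ∘ₗ (φ : D →ₗ[k] C) = (f ∘ₗ (φ : D →ₗ[k] C)) ^ n := by
  induction n with
  | zero => simpa using one_comp φ
  | succ n ih => rw [pow_succ, pow_succ, mul_comp, ih]

end Pullback

section ExpE

variable {k : Type u} [Field k] [CharZero k] {R : Type*} [Ring R] [Module k R]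
  [IsScalarTower k R R] [SMulCommClass k R R]

/-- truncated exponential -/
noncomputable def expE (x : R) (N : ℕ) : R :=
  ∑ n ∈ Finset.range N, ((n.factorial : k)⁻¹) • x ^ n

lemma pow_eq_zero_of_le' {x : R} {p i : ℕ} (hx : x ^ p = 0) (h : p ≤ i) : x ^ i = 0 := by
  rw [← Nat.add_sub_cancel' h, pow_add, hx, zero_mul]

lemma expE_trunc {x : R} {p N : ℕ} (hx : x ^ p = 0) (h : p ≤ N) :
    (expE (k := k) x N : R) = expE (k := k) x p := by
  unfold expE
  rw [Finset.range_eq_Ico, ← Finset.sum_Ico_consecutive _ (Nat.zero_le p) h]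
  have h0 : ∑ n ∈ Finset.Ico p N, ((n.factorial : k)⁻¹) • x ^ n = 0 :=
    Finset.sum_eq_zero fun n hn => by
      rw [pow_eq_zero_of_le' hx (Finset.mem_Ico.mp hn).1, smul_zero]
  rw [h0, add_zero, Finset.range_eq_Ico]

lemma expE_zero {N : ℕ} (hN : 1 ≤ N) : (expE (k := k) (0 : R) N : R) = 1 := by
  unfold expE
  rw [Finset.sum_eq_single 0]
  · simp
  · intro n _ hn
    rw [zero_pow hn, smul_zero]
  · intro h
    exact absurd (Finset.mem_range.mpr hN) h

lemma factorial_coeff {m n : ℕ} (h : m ≤ n) :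
    ((n.factorial : k))⁻¹ * (n.choose m : k) =
      ((m.factorial : k))⁻¹ * (((n - m).factorial : k))⁻¹ := by
  have key : (m.factorial : k) * ((n - m).factorial : k) * (n.choose m : k)
      = (n.factorial : k) := by
    rw [← Nat.cast_mul, ← Nat.cast_mul]
    norm_cast
    rw [mul_comm, ← mul_assoc]
    exact Nat.choose_mul_factorial_mul_factorial h
  have h1 : (n.factorial : k) ≠ 0 := Nat.cast_ne_zero.2 (Nat.factorial_ne_zero _)
  have h2 : (m.factorial : k) ≠ 0 := Nat.cast_ne_zero.2 (Nat.factorial_ne_zero _)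
  have h3 : ((n - m).factorial : k) ≠ 0 := Nat.cast_ne_zero.2 (Nat.factorial_ne_zero _)
  field_simp
  rw [← key]
  ring

lemma nat_cast_mul_eq_smul (c : ℕ) (z : R) : z * (c : R) = (c : k) • z := by
  rw [← (Nat.cast_commute c z).eq, ← nsmul_eq_mul, ← Nat.cast_smul_eq_nsmul k]

lemma expE_mul {x y : R} (h : Commute x y) {p q : ℕ} (hx : x ^ p = 0) (hy : y ^ q = 0) :
    (expE (k := k) x (p + q) : R) * expE (k := k) y (p + q) = expE (k := k) (x + y) (p + q) := by
  set K := p + q with hK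
  have hzero : ∀ i j : ℕ, K ≤ i + j →
      (((i.factorial : k))⁻¹ * ((j.factorial : k))⁻¹) • (x ^ i * y ^ j) = 0 := by
    intro i j hij
    rcases le_or_gt p i with hi | hi
    · rw [pow_eq_zero_of_le' hx hi, zero_mul, smul_zero]
    · have hj : q ≤ j := by omega
      rw [pow_eq_zero_of_le' hy hj, mul_zero, smul_zero]
  have hLHS : (expE (k := k) x K : R) * expE (k := k) y K
      = ∑ i ∈ Finset.range K, ∑ j ∈ Finset.range K,
          (((i.factorial : k))⁻¹ * ((j.factorial : k))⁻¹) • (x ^ i * y ^ j) := by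
    unfold expE
    rw [Finset.sum_mul_sum]
    refine Finset.sum_congr rfl fun i _ => Finset.sum_congr rfl fun j _ => ?_
    rw [smul_mul_smul_comm]
  have hRHS : (expE (k := k) (x + y) K : R)
      = ∑ n ∈ Finset.range K, ∑ m ∈ Finset.range (n + 1),
          (((m.factorial : k))⁻¹ * (((n - m).factorial : k))⁻¹) • (x ^ m * y ^ (n - m)) := by
    unfold expE
    refine Finset.sum_congr rfl fun n _ => ?_
    rw [h.add_pow, Finset.smul_sum]
    refine Finset.sum_congr rfl fun m hm => ?_
    have hmn : m ≤ n := Nat.lt_succ_iff.mp (Finset.mem_range.mp hm)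
    rw [nat_cast_mul_eq_smul (k := k) (n.choose m), smul_smul, factorial_coeff hmn]
  rw [hLHS, hRHS, Finset.sum_range_diag_flip K
    (fun m j => (((m.factorial : k))⁻¹ * ((j.factorial : k))⁻¹) • (x ^ m * y ^ j))]
  refine Finset.sum_congr rfl fun i hi => ?_
  have hiK : i < K := Finset.mem_range.mp hi
  refine (Finset.sum_subset (Finset.range_subset_range.2 (by omega)) fun j hj hj' => ?_).symm
  have hjK : j < K := Finset.mem_range.mp hj
  have : ¬ j < K - i := fun hlt => hj' (Finset.mem_range.mpr hlt)
  exact hzero i j (by omega)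

end ExpE


lemma expE_comp {k : Type u} [Field k] {C D : Type u}
    [AddCommGroup C] [Module k C] [Coalgebra k C]
    [AddCommGroup D] [Module k D] [Coalgebra k D]
    (φ : D →ₗc[k] C) (f : C →ₗ[k] k) (N : ℕ) :
    (expE (k := k) f N) ∘ₗ (φ : D →ₗ[k] C) = expE (k := k) (f ∘ₗ (φ : D →ₗ[k] C)) N := by
  ext d
  simp only [expE, LinearMap.coe_sum, Finset.sum_apply, LinearMap.smul_apply,
    LinearMap.comp_apply]
  refine Finset.sum_congr rfl fun n _ => ?_
  rw [← LinearMap.comp_apply, pow_comp]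

section BialgebraMaps

variable {k A : Type u} [Field k] [Ring A] [Bialgebra k A]

lemma mulmul_ttt (u v : A ⊗[k] A) :
    TensorProduct.map (LinearMap.mul' k A) (LinearMap.mul' k A)
      (TensorProduct.tensorTensorTensorComm k A A A A (u ⊗ₜ[k] v)) = u * v := by
  induction u using TensorProduct.induction_on with
  | zero => simp
  | tmul x y =>
    induction v using TensorProduct.induction_on with
    | zero => simp
    | tmul z w => simp [Algebra.TensorProduct.tmul_mul_tmul]
    | add v₁ v₂ h₁ h₂ => simp only [tmul_add, map_add, h₁, h₂, mul_add]
  | add u₁ u₂ h₁ h₂ => simp only [add_tmul, map_add, h₁, h₂, add_mul]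

/-- multiplication as a coalgebra hom -/
noncomputable def mulCoalgHom : A ⊗[k] A →ₗc[k] A where
  toLinearMap := LinearMap.mul' k A
  counit_comp := by
    apply TensorProduct.ext'
    intro x y
    simp [mul_comm]
  map_comp_comul := by
    apply TensorProduct.ext'
    intro x y
    simp only [LinearMap.comp_apply, LinearMap.mul'_apply, TensorProduct.comul_tmul,
      AlgebraTensorModule.tensorTensorTensorComm_eq,
      TensorProduct.map_tmul, LinearEquiv.coe_coe]
    rw [mulmul_ttt]
    simp [Bialgebra.comul_mul]

lemma mulCoalgHom_toLinearMap :
    ((mulCoalgHom : A ⊗[k] A →ₗc[k] A) : A ⊗[k] A →ₗ[k] A) = LinearMap.mul' k A := rfl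

/-- x ⊗ (y ⊗ z) ↦ x ⊗ yz as a coalgebra hom -/
noncomputable def idMulHom : A ⊗[k] (A ⊗[k] A) →ₗc[k] A ⊗[k] A :=
  Coalgebra.TensorProduct.map (CoalgHom.id k A) mulCoalgHom

/-- x ⊗ (y ⊗ z) ↦ xy ⊗ z as a coalgebra hom -/
noncomputable def mulIdHom : A ⊗[k] (A ⊗[k] A) →ₗc[k] A ⊗[k] A :=
  (Coalgebra.TensorProduct.map mulCoalgHom (CoalgHom.id k A)).comp
    (Coalgebra.TensorProduct.assoc k k A A A).symm.toCoalgHom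

/-- x ⊗ (y ⊗ z) ↦ ε(x) (y ⊗ z) as a coalgebra hom -/
noncomputable def dropLeftHom : A ⊗[k] (A ⊗[k] A) →ₗc[k] A ⊗[k] A :=
  (Coalgebra.TensorProduct.lid k (A ⊗[k] A)).toCoalgHom.comp
    (Coalgebra.TensorProduct.map (Coalgebra.counitCoalgHom k A) (CoalgHom.id k (A ⊗[k] A)))

/-- x ⊗ (y ⊗ z) ↦ ε(z) (x ⊗ y) as a coalgebra hom -/
noncomputable def dropRightHom : A ⊗[k] (A ⊗[k] A) →ₗc[k] A ⊗[k] A :=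
  ((Coalgebra.TensorProduct.rid k k (A ⊗[k] A)).toCoalgHom.comp
    (Coalgebra.TensorProduct.map (CoalgHom.id k (A ⊗[k] A)) (Coalgebra.counitCoalgHom k A))).comp
    (Coalgebra.TensorProduct.assoc k k A A A).symm.toCoalgHom

end BialgebraMaps

section

variable {k A : Type u} [Field k] [Ring A] [Bialgebra k A]

lemma convPow_eq_pow (f : A ⊗[k] A →ₗ[k] k) (n : ℕ) : convPow f n = f ^ n := by
  induction n with
  | zero => rfl
  | succ n ih => rw [convPow, ih, conv_eq_mul, ← pow_succ']

lemma expConv_eq_expE (f : A ⊗[k] A →ₗ[k] k) (N : ℕ) :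
    expConv f N = expE (k := k) f N := by
  unfold expConv expE
  exact Finset.sum_congr rfl fun n _ => by rw [convPow_eq_pow]

lemma epsTensor_eq (g : A ⊗[k] A →ₗ[k] k) :
    epsTensor g = g ∘ₗ ((dropLeftHom : A ⊗[k] (A ⊗[k] A) →ₗc[k] A ⊗[k] A) : _ →ₗ[k] _) := by
  apply TensorProduct.ext'
  intro x w
  simp [epsTensor, dropLeftHom, smul_eq_mul]

lemma fIdMul_eq (g : A ⊗[k] A →ₗ[k] k) :
    fIdMul g = g ∘ₗ ((idMulHom : A ⊗[k] (A ⊗[k] A) →ₗc[k] A ⊗[k] A) : _ →ₗ[k] _) := by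
  apply TensorProduct.ext'
  intro x w
  simp [fIdMul, idMulHom, mulCoalgHom]

lemma tensorEps_eq (g : A ⊗[k] A →ₗ[k] k) :
    tensorEps g = g ∘ₗ ((dropRightHom : A ⊗[k] (A ⊗[k] A) →ₗc[k] A ⊗[k] A) : _ →ₗ[k] _) := by
  apply TensorProduct.ext'
  intro x w
  induction w using TensorProduct.induction_on with
  | zero => simp
  | tmul y z => simp [tensorEps, dropRightHom, smul_eq_mul, mul_comm]
  | add w₁ w₂ h₁ h₂ => simp only [tmul_add, map_add, h₁, h₂]

lemma fMulId_eq (g : A ⊗[k] A →ₗ[k] k) :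
    fMulId g = g ∘ₗ ((mulIdHom : A ⊗[k] (A ⊗[k] A) →ₗc[k] A ⊗[k] A) : _ →ₗ[k] _) := by
  apply TensorProduct.ext'
  intro x w
  induction w using TensorProduct.induction_on with
  | zero => simp
  | tmul y z => simp [fMulId, mulIdHom, mulCoalgHom]
  | add w₁ w₂ h₁ h₂ => simp only [tmul_add, map_add, h₁, h₂]

lemma conv_apply_one_tmul (f g : A ⊗[k] A →ₗ[k] k) (hf : ∀ x, f ((1:A) ⊗ₜ[k] x) = 0) (a : A) :
    conv f g ((1:A) ⊗ₜ[k] a) = 0 := by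
  have key : ∀ w : A ⊗[k] A, LinearMap.mul' k k (TensorProduct.map f g
      (TensorProduct.tensorTensorTensorComm k A A A A (((1:A) ⊗ₜ[k] (1:A)) ⊗ₜ[k] w))) = 0 := by
    intro w
    induction w using TensorProduct.induction_on with
    | zero => simp
    | tmul y z => simp [hf]
    | add w₁ w₂ h₁ h₂ =>
      rw [tmul_add, map_add, map_add, map_add]
      rw [h₁, h₂, add_zero]
  have hc : conv f g ((1:A) ⊗ₜ[k] a)
      = LinearMap.mul' k k (TensorProduct.map f g (Coalgebra.comul ((1:A) ⊗ₜ[k] a))) := rfl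
  have hcom : (Coalgebra.comul ((1:A) ⊗ₜ[k] a) : (A ⊗[k] A) ⊗[k] (A ⊗[k] A))
      = TensorProduct.tensorTensorTensorComm k A A A A
          (((1:A) ⊗ₜ[k] (1:A)) ⊗ₜ[k] (Coalgebra.comul a : A ⊗[k] A)) := by
    simp [TensorProduct.comul_def, Algebra.TensorProduct.one_def,
      AlgebraTensorModule.tensorTensorTensorComm_eq]
  rw [hc, hcom]
  exact key _

lemma conv_apply_tmul_one (f g : A ⊗[k] A →ₗ[k] k) (hf : ∀ x, f (x ⊗ₜ[k] (1:A)) = 0) (a : A) :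
    conv f g (a ⊗ₜ[k] (1:A)) = 0 := by
  have key : ∀ w : A ⊗[k] A, LinearMap.mul' k k (TensorProduct.map f g
      (TensorProduct.tensorTensorTensorComm k A A A A (w ⊗ₜ[k] ((1:A) ⊗ₜ[k] (1:A))))) = 0 := by
    intro w
    induction w using TensorProduct.induction_on with
    | zero => simp
    | tmul y z => simp [hf]
    | add w₁ w₂ h₁ h₂ =>
      rw [add_tmul, map_add, map_add, map_add]
      rw [h₁, h₂, add_zero]
  have hc : conv f g (a ⊗ₜ[k] (1:A))
      = LinearMap.mul' k k (TensorProduct.map f g (Coalgebra.comul (a ⊗ₜ[k] (1:A)))) := rfl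
  have hcom : (Coalgebra.comul (a ⊗ₜ[k] (1:A)) : (A ⊗[k] A) ⊗[k] (A ⊗[k] A))
      = TensorProduct.tensorTensorTensorComm k A A A A
          ((Coalgebra.comul a : A ⊗[k] A) ⊗ₜ[k] ((1:A) ⊗ₜ[k] (1:A))) := by
    simp [TensorProduct.comul_def, Algebra.TensorProduct.one_def,
      AlgebraTensorModule.tensorTensorTensorComm_eq]
  rw [hc, hcom]
  exact key _

lemma counit_one_tmul (a : A) :
    (Coalgebra.counit ((1:A) ⊗ₜ[k] a) : k) = Coalgebra.counit a := by
  simp [TensorProduct.counit_def]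

lemma counit_tmul_one (a : A) :
    (Coalgebra.counit (a ⊗ₜ[k] (1:A)) : k) = Coalgebra.counit a := by
  simp [TensorProduct.counit_def]


/-- Let `k` have characteristic zero and let `f : A ⊗ A → k` be a normalized Hochschild
2-cocycle which is nilpotent in the convolution algebra (`f^{*n₀} = 0`), such that
`f∘(id⊗m)` commutes with `ε⊗f` and `f∘(m⊗id)` commutes with `f⊗ε` under convolution.
Then `e^f = Σ_n f^{*n}/n!` (a finite sum by nilpotency) is a normalized multiplicative
2-cocycle, convolution invertible with inverse `e^{−f}`, and its lowest-order nonconstant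
term is `f`. -/
theorem exp_hochschild_is_mult_cocycle [CharZero k]
    (f : A ⊗[k] A →ₗ[k] k)
    (hHoch : ∀ x y z : A,
        Coalgebra.counit x * f (y ⊗ₜ[k] z) + f (x ⊗ₜ[k] (y * z))
          = f (x ⊗ₜ[k] y) * Coalgebra.counit z + f ((x * y) ⊗ₜ[k] z))
    (hnorm₁ : ∀ a : A, f ((1 : A) ⊗ₜ[k] a) = 0)
    (hnorm₂ : ∀ a : A, f (a ⊗ₜ[k] (1 : A)) = 0)
    (n₀ : ℕ) (hnil : convPow f n₀ = 0)
    (hcomm₁ : conv (fIdMul f) (epsTensor f) = conv (epsTensor f) (fIdMul f))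
    (hcomm₂ : conv (fMulId f) (tensorEps f) = conv (tensorEps f) (fMulId f)) :
    (conv (epsTensor (expConv f n₀)) (fIdMul (expConv f n₀))
        = conv (tensorEps (expConv f n₀)) (fMulId (expConv f n₀))) ∧
    (∀ a : A, expConv f n₀ ((1 : A) ⊗ₜ[k] a) = Coalgebra.counit a) ∧
    (∀ a : A, expConv f n₀ (a ⊗ₜ[k] (1 : A)) = Coalgebra.counit a) ∧
    (conv (expConv f n₀) (expConv (-f) n₀) = (Coalgebra.counit : A ⊗[k] A →ₗ[k] k)) ∧
    (conv (expConv (-f) n₀) (expConv f n₀) = (Coalgebra.counit : A ⊗[k] A →ₗ[k] k)) ∧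
    (expConv f n₀ = (Coalgebra.counit : A ⊗[k] A →ₗ[k] k) + f
        + ∑ n ∈ Finset.Ico 2 n₀, ((n.factorial : k)⁻¹) • convPow f n) := by
  have hn₀ : 1 ≤ n₀ := by
    by_contra hlt
    have h0 : n₀ = 0 := by omega
    subst h0
    have h1 := LinearMap.congr_fun hnil ((1:A) ⊗ₜ[k] (1:A))
    simp only [convPow, LinearMap.zero_apply, counit_one_tmul, Bialgebra.counit_one] at h1
    exact one_ne_zero h1
  have hfpow : f ^ n₀ = 0 := by rw [← convPow_eq_pow]; exact hnil
  have hexp : expConv f n₀ = expE (k := k) f n₀ := expConv_eq_expE f n₀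
  -- nilpotency of the four pulled-back functionals
  have ha : (epsTensor f) ^ n₀ = 0 := by
    rw [epsTensor_eq, ← pow_comp, hfpow, LinearMap.zero_comp]
  have hb : (fIdMul f) ^ n₀ = 0 := by
    rw [fIdMul_eq, ← pow_comp, hfpow, LinearMap.zero_comp]
  have ha' : (tensorEps f) ^ n₀ = 0 := by
    rw [tensorEps_eq, ← pow_comp, hfpow, LinearMap.zero_comp]
  have hb' : (fMulId f) ^ n₀ = 0 := by
    rw [fMulId_eq, ← pow_comp, hfpow, LinearMap.zero_comp]
  have hcom1 : Commute (epsTensor f) (fIdMul f) := by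
    unfold Commute SemiconjBy
    rw [← conv_eq_mul, ← conv_eq_mul]
    exact hcomm₁.symm
  have hcom2 : Commute (tensorEps f) (fMulId f) := by
    unfold Commute SemiconjBy
    rw [← conv_eq_mul, ← conv_eq_mul]
    exact hcomm₂.symm
  have hsum : epsTensor f + fIdMul f = tensorEps f + fMulId f := by
    apply TensorProduct.ext'
    intro x w
    induction w using TensorProduct.induction_on with
    | zero => simp
    | tmul y z =>
      have h := hHoch x y z
      simp only [LinearMap.add_apply, epsTensor, tensorEps, fIdMul, fMulId,
        LinearMap.comp_apply, TensorProduct.map_tmul, LinearMap.mul'_apply,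
        LinearEquiv.coe_coe, TensorProduct.assoc_symm_tmul, LinearMap.id_coe, id_eq]
      exact h
    | add w₁ w₂ h₁ h₂ =>
      simp only [tmul_add, map_add, h₁, h₂]
  refine ⟨?_, ?_, ?_, ?_, ?_, ?_⟩
  · -- multiplicative cocycle identity
    have key1 : epsTensor (expConv f n₀) = expE (k := k) (epsTensor f) n₀ := by
      rw [hexp, epsTensor_eq, expE_comp, ← epsTensor_eq]
    have key2 : fIdMul (expConv f n₀) = expE (k := k) (fIdMul f) n₀ := by
      rw [hexp, fIdMul_eq, expE_comp, ← fIdMul_eq]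
    have key3 : tensorEps (expConv f n₀) = expE (k := k) (tensorEps f) n₀ := by
      rw [hexp, tensorEps_eq, expE_comp, ← tensorEps_eq]
    have key4 : fMulId (expConv f n₀) = expE (k := k) (fMulId f) n₀ := by
      rw [hexp, fMulId_eq, expE_comp, ← fMulId_eq]
    rw [key1, key2, key3, key4, conv_eq_mul, conv_eq_mul,
      ← expE_trunc (k := k) ha (Nat.le_add_right n₀ n₀),
      ← expE_trunc (k := k) hb (Nat.le_add_right n₀ n₀),
      ← expE_trunc (k := k) ha' (Nat.le_add_right n₀ n₀),
      ← expE_trunc (k := k) hb' (Nat.le_add_right n₀ n₀),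
      expE_mul hcom1 ha hb, expE_mul hcom2 ha' hb', hsum]
  · -- left normalization
    intro a
    simp only [expConv, LinearMap.coe_sum, Finset.sum_apply, LinearMap.smul_apply]
    rw [Finset.sum_eq_single 0]
    · simp [convPow, counit_one_tmul]
    · intro n _ h0
      obtain ⟨m, rfl⟩ : ∃ m, n = m + 1 := ⟨n - 1, by omega⟩
      rw [convPow, conv_apply_one_tmul f _ hnorm₁ a, smul_zero]
    · intro h
      exact absurd (Finset.mem_range.mpr hn₀) h
  · -- right normalization
    intro a
    simp only [expConv, LinearMap.coe_sum, Finset.sum_apply, LinearMap.smul_apply]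
    rw [Finset.sum_eq_single 0]
    · simp [convPow, counit_tmul_one]
    · intro n _ h0
      obtain ⟨m, rfl⟩ : ∃ m, n = m + 1 := ⟨n - 1, by omega⟩
      rw [convPow, conv_apply_tmul_one f _ hnorm₂ a, smul_zero]
    · intro h
      exact absurd (Finset.mem_range.mpr hn₀) h
  · -- right inverse
    have hneg : (-f) ^ n₀ = 0 := by
      have h := neg_pow f n₀
      rw [hfpow, mul_zero] at h
      exact h
    rw [conv_eq_mul, hexp, expConv_eq_expE,
      ← expE_trunc (k := k) hfpow (Nat.le_add_right n₀ n₀),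
      ← expE_trunc (k := k) hneg (Nat.le_add_right n₀ n₀),
      expE_mul ((Commute.refl f).neg_right) hfpow hneg, add_neg_cancel,
      expE_zero (by omega)]
    rfl
  · -- left inverse
    have hneg : (-f) ^ n₀ = 0 := by
      have h := neg_pow f n₀
      rw [hfpow, mul_zero] at h
      exact h
    rw [conv_eq_mul, hexp, expConv_eq_expE,
      ← expE_trunc (k := k) hneg (Nat.le_add_right n₀ n₀),
      ← expE_trunc (k := k) hfpow (Nat.le_add_right n₀ n₀),
      expE_mul ((Commute.refl f).neg_left) hneg hfpow, neg_add_cancel,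
      expE_zero (by omega)]
    rfl
  · -- lowest-order terms
    by_cases h2 : n₀ = 1
    · subst h2
      have hf0 : f = 0 := by
        have h1 := hnil
        rw [convPow, convPow, conv_counit_right] at h1
        exact h1
      simp [expConv, convPow, hf0, Nat.factorial, Finset.Ico_eq_empty (by omega : ¬ (2:ℕ) < 1)]
    · have h3 : 2 ≤ n₀ := by omega
      rw [expConv, Finset.range_eq_Ico, ← Finset.sum_Ico_consecutive _ (Nat.zero_le 2) h3]
      congr 1
      rw [← Finset.range_eq_Ico, Finset.sum_range_succ, Finset.sum_range_one]
      have e0 : convPow f 0 = (Coalgebra.counit : A ⊗[k] A →ₗ[k] k) := rfl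
      have e1 : convPow f 1 = f := by
        rw [convPow, e0, conv_counit_right]
      rw [e0, e1]
      norm_num [Nat.factorial]

end
end

section
/- Let k be a field, ℓ ≥ 2 an integer, and q ∈ k a primitive ℓ-th root of unity. Let B be an associative unital k-algebra and x, y ∈ B elements satisfying y·x = q·x·y and x^i·y^{ℓ−i} = 0 for all i = 0, 1, …, ℓ. Then exp_q(x + y) = exp_q(x)·exp_q(y), where exp_q(z) = Σ_{m=0}^{ℓ−1} z^m/[m]_q!. -/
/-- The q-integer `[m]_q = 1 + q + ⋯ + q^{m−1}`. -/
def qInt {k : Type*} [Field k] (q : k) (m : ℕ) : k := ∑ i ∈ Finset.range m, q ^ i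

/-- The q-factorial `[m]_q! = [1]_q [2]_q ⋯ [m]_q` (with `[0]_q! = 1`). -/
def qFactorial {k : Type*} [Field k] (q : k) (m : ℕ) : k :=
  ∏ i ∈ Finset.range m, qInt q (i + 1)

/-- The (truncated) q-exponential `exp_q(z) = Σ_{m=0}^{ℓ−1} z^m/[m]_q!` of an element of a
`k`-algebra. -/
noncomputable def qExp {k : Type*} [Field k] (q : k) (ℓ : ℕ)
    {B : Type*} [Ring B] [Algebra k B] (z : B) : B :=
  ∑ m ∈ Finset.range ℓ, (qFactorial q m)⁻¹ • z ^ m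

/-- Gaussian binomial coefficient. -/
def gb {k : Type*} [Field k] (q : k) : ℕ → ℕ → k
  | 0, 0 => 1
  | 0, _+1 => 0
  | m+1, 0 => gb q m 0
  | m+1, i+1 => q ^ (m - i) * gb q m i + gb q m (i+1)

lemma gb_zero {k : Type*} [Field k] (q : k) (m : ℕ) : gb q m 0 = 1 := by
  induction m with
  | zero => rfl
  | succ m ih => simpa [gb] using ih

lemma gb_of_gt {k : Type*} [Field k] (q : k) : ∀ m i : ℕ, m < i → gb q m i = 0 := by
  intro m
  induction m with
  | zero => intro i hi; match i, hi with | (j+1), _ => rfl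
  | succ m ih =>
    intro i hi
    match i, hi with
    | (j+1), hj =>
      have h1 : gb q m j = 0 := ih j (by omega)
      have h2 : gb q m (j+1) = 0 := ih (j+1) (by omega)
      simp [gb, h1, h2]

lemma gb_self {k : Type*} [Field k] (q : k) (m : ℕ) : gb q m m = 1 := by
  induction m with
  | zero => rfl
  | succ m ih => simp [gb, ih, gb_of_gt q m (m+1) (by omega)]

lemma qInt_add {k : Type*} [Field k] (q : k) (a b : ℕ) :
    qInt q (a + b) = qInt q b + q ^ b * qInt q a := by
  unfold qInt
  rw [add_comm a b, Finset.sum_range_add, Finset.mul_sum]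
  congr 1
  exact Finset.sum_congr rfl fun i _ => by rw [pow_add]

lemma qFactorial_succ {k : Type*} [Field k] (q : k) (m : ℕ) :
    qFactorial q (m + 1) = qFactorial q m * qInt q (m + 1) := by
  unfold qFactorial; rw [Finset.prod_range_succ]

lemma gb_mul_fact {k : Type*} [Field k] (q : k) :
    ∀ m i : ℕ, i ≤ m →
      qFactorial q i * qFactorial q (m - i) * gb q m i = qFactorial q m := by
  intro m
  induction m with
  | zero => intro i hi; interval_cases i; simp [qFactorial, gb]
  | succ m ih =>
    intro i hi
    match i with
    | 0 => simp [qFactorial, gb_zero]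
    | j + 1 =>
      rcases eq_or_lt_of_le hi with h | h
      · rw [h]
        simp [gb_self, qFactorial]
      · have hj : j + 1 ≤ m := by omega
        have hjm : j ≤ m := by omega
        have e1 : m + 1 - (j + 1) = m - j := by omega
        have e2 : m - j = (m - (j+1)) + 1 := by omega
        rw [e1, show gb q (m+1) (j+1) = q ^ (m - j) * gb q m j + gb q m (j+1) from rfl]
        rw [mul_add]
        have t1 : qFactorial q (j+1) * qFactorial q (m - j) * (q ^ (m - j) * gb q m j)
            = (qInt q (j+1) * q ^ (m - j)) * qFactorial q m := by
          rw [← ih j hjm, qFactorial_succ]; ring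
        have t2 : qFactorial q (j+1) * qFactorial q (m - j) * gb q m (j+1)
            = qInt q (m - j) * qFactorial q m := by
          rw [← ih (j+1) hj]
          rw [show qFactorial q (m - j) = qFactorial q (m - (j+1)) * qInt q (m - j) by
            rw [e2, qFactorial_succ, ← e2]]
          ring
        rw [t1, t2, qFactorial_succ]
        have : qInt q (m + 1) = qInt q (m - j) + q ^ (m - j) * qInt q (j + 1) := by
          rw [show m + 1 = (j + 1) + (m - j) by omega, qInt_add]
        rw [this]; ring

lemma ypow_mul_x {k : Type*} [Field k] (q : k) {B : Type*} [Ring B] [Algebra k B]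
    {x y : B} (hyx : y * x = q • (x * y)) :
    ∀ j : ℕ, y ^ j * x = (q ^ j) • (x * y ^ j) := by
  intro j
  induction j with
  | zero => simp
  | succ j ih =>
    rw [pow_succ', mul_assoc, ih, mul_smul_comm, ← mul_assoc, hyx, smul_mul_assoc,
      smul_smul, mul_assoc, ← pow_succ', ← pow_succ]

lemma q_binomial {k : Type*} [Field k] (q : k) {B : Type*} [Ring B] [Algebra k B]
    {x y : B} (hyx : y * x = q • (x * y)) (m : ℕ) :
    (x + y) ^ m = ∑ i ∈ Finset.range (m + 1), gb q m i • (x ^ i * y ^ (m - i)) := by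
  induction m with
  | zero => simp [gb]
  | succ m ih =>
    rw [pow_succ, ih, Finset.sum_mul]
    have expand : ∀ i, gb q m i • (x ^ i * y ^ (m - i)) * (x + y)
        = (gb q m i * q ^ (m - i)) • (x ^ (i+1) * y ^ (m - i))
          + gb q m i • (x ^ i * y ^ (m + 1 - i)) := by
      intro i
      rw [mul_add, smul_mul_assoc, smul_mul_assoc]
      congr 1
      · rw [mul_assoc, ypow_mul_x q hyx, mul_smul_comm, smul_smul, ← mul_assoc, ← pow_succ]
      · by_cases hi : i ≤ m
        · rw [mul_assoc, ← pow_succ, show m - i + 1 = m + 1 - i by omega]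
        · rw [gb_of_gt q m i (by omega)]; simp
    rw [Finset.sum_congr rfl fun i _ => expand i, Finset.sum_add_distrib]
    -- RHS: split off i = 0 via sum_range_succ'
    rw [Finset.sum_range_succ' (fun i => gb q (m+1) i • (x ^ i * y ^ (m + 1 - i))) (m+1)]
    have hgb0 : gb q (m+1) 0 • (x ^ 0 * y ^ (m + 1 - 0)) = (1:k) • y ^ (m+1) := by
      simp [gb_zero]
    rw [hgb0]
    have hA : ∀ i ∈ Finset.range (m+1),
        gb q (m+1) (i+1) • (x ^ (i+1) * y ^ (m + 1 - (i+1)))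
        = (q ^ (m - i) * gb q m i) • (x ^ (i+1) * y ^ (m - i))
          + gb q m (i+1) • (x ^ (i+1) * y ^ (m - i)) := by
      intro i _
      rw [show gb q (m+1) (i+1) = q ^ (m - i) * gb q m i + gb q m (i+1) from rfl,
        show m + 1 - (i+1) = m - i by omega, add_smul]
    rw [Finset.sum_congr rfl hA, Finset.sum_add_distrib]
    have hB : ∑ i ∈ Finset.range (m+1), gb q m i • (x ^ i * y ^ (m + 1 - i))
        = (∑ i ∈ Finset.range m, gb q m (i+1) • (x ^ (i+1) * y ^ (m - i)))
          + (1:k) • y ^ (m+1) := by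
      rw [Finset.sum_range_succ' (fun i => gb q m i • (x ^ i * y ^ (m + 1 - i))) m]
      have hc : ∀ i ∈ Finset.range m,
          gb q m (i+1) • (x ^ (i+1) * y ^ (m + 1 - (i+1)))
          = gb q m (i+1) • (x ^ (i+1) * y ^ (m - i)) := fun i _ => by
        rw [show m + 1 - (i+1) = m - i by omega]
      rw [Finset.sum_congr rfl hc]
      simp [gb_zero]
    have hC : ∑ i ∈ Finset.range (m+1), gb q m (i+1) • (x ^ (i+1) * y ^ (m - i))
        = ∑ i ∈ Finset.range m, gb q m (i+1) • (x ^ (i+1) * y ^ (m - i)) := by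
      rw [Finset.sum_range_succ, gb_of_gt q m (m+1) (by omega)]
      simp
    have hD : ∀ i ∈ Finset.range (m+1),
        (gb q m i * q ^ (m - i)) • (x ^ (i+1) * y ^ (m - i))
        = (q ^ (m - i) * gb q m i) • (x ^ (i+1) * y ^ (m - i)) := by
      intro i _; rw [mul_comm]
    rw [Finset.sum_congr rfl hD, hB, hC]
    abel

lemma qInt_ne_zero {k : Type*} [Field k] {q : k} {ℓ : ℕ} (hℓ : 2 ≤ ℓ)
    (hq : IsPrimitiveRoot q ℓ) {m : ℕ} (h0 : 0 < m) (hm : m < ℓ) : qInt q m ≠ 0 := by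
  have hq1 : q ≠ 1 := hq.ne_one hℓ
  have : qInt q m = (q ^ m - 1) / (q - 1) := geom_sum_eq hq1 m
  rw [this]
  have := hq.pow_ne_one_of_pos_of_lt h0.ne' hm
  exact div_ne_zero (sub_ne_zero.mpr this) (sub_ne_zero.mpr hq1)

lemma qFactorial_ne_zero {k : Type*} [Field k] {q : k} {ℓ : ℕ} (hℓ : 2 ≤ ℓ)
    (hq : IsPrimitiveRoot q ℓ) {m : ℕ} (hm : m < ℓ) : qFactorial q m ≠ 0 := by
  unfold qFactorial
  rw [Finset.prod_ne_zero_iff]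
  intro i hi
  rw [Finset.mem_range] at hi
  exact qInt_ne_zero hℓ hq (by omega) (by omega)

lemma sum_tri {M : Type*} [AddCommMonoid M] (ℓ : ℕ) (g : ℕ → ℕ → M) :
    ∑ m ∈ Finset.range ℓ, ∑ i ∈ Finset.range (m+1), g i (m - i)
    = ∑ p ∈ (Finset.range ℓ ×ˢ Finset.range ℓ).filter (fun p => p.1 + p.2 < ℓ),
        g p.1 p.2 := by
  rw [Finset.sum_sigma' (Finset.range ℓ) (fun m => Finset.range (m+1))
    (fun m i => g i (m - i))]
  apply Finset.sum_nbij' (fun p => (p.2, p.1 - p.2)) (fun p => ⟨p.1 + p.2, p.1⟩)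
  · intro a ha
    simp only [Finset.mem_sigma, Finset.mem_range] at ha
    simp only [Finset.mem_filter, Finset.mem_product, Finset.mem_range]
    omega
  · intro a ha
    simp only [Finset.mem_filter, Finset.mem_product, Finset.mem_range] at ha
    simp only [Finset.mem_sigma, Finset.mem_range]
    omega
  · intro a ha
    obtain ⟨m, i⟩ := a
    simp only [Finset.mem_sigma, Finset.mem_range] at ha
    have h : i + (m - i) = m := by omega
    simp [h]
  · intro a ha
    obtain ⟨i, j⟩ := a
    have h : i + j - i = j := by omega
    simp [h]
  · intro a ha
    rfl

/-- Witherspoon's addition formula for q-exponentials: if `q` is a primitive `ℓ`-th root of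
unity (`ℓ ≥ 2`), `y·x = q·x·y` and `x^i y^{ℓ−i} = 0` for `i = 0, …, ℓ`, then
`exp_q(x + y) = exp_q(x)·exp_q(y)`. -/
theorem qExp_add {k : Type*} [Field k] (q : k) (ℓ : ℕ) (hℓ : 2 ≤ ℓ)
    (hq : IsPrimitiveRoot q ℓ)
    {B : Type*} [Ring B] [Algebra k B] (x y : B)
    (hyx : y * x = q • (x * y))
    (hnil : ∀ i : ℕ, i ≤ ℓ → x ^ i * y ^ (ℓ - i) = 0) :
    qExp q ℓ (x + y) = qExp q ℓ x * qExp q ℓ y := by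
  unfold qExp
  -- LHS
  have lhs_eq : ∑ m ∈ Finset.range ℓ, (qFactorial q m)⁻¹ • (x + y) ^ m
      = ∑ m ∈ Finset.range ℓ, ∑ i ∈ Finset.range (m+1),
          ((qFactorial q i)⁻¹ * (qFactorial q (m - i))⁻¹) • (x ^ i * y ^ (m - i)) := by
    apply Finset.sum_congr rfl
    intro m hm
    rw [Finset.mem_range] at hm
    rw [q_binomial q hyx m, Finset.smul_sum]
    apply Finset.sum_congr rfl
    intro i hi
    rw [Finset.mem_range] at hi
    rw [smul_smul]
    congr 1
    have key := gb_mul_fact q m i (by omega)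
    have h1 : qFactorial q i ≠ 0 := qFactorial_ne_zero hℓ hq (by omega)
    have h2 : qFactorial q (m - i) ≠ 0 := qFactorial_ne_zero hℓ hq (by omega)
    have h3 : qFactorial q m ≠ 0 := qFactorial_ne_zero hℓ hq hm
    field_simp
    rw [← key]; ring
  -- RHS
  have rhs_eq : (∑ m ∈ Finset.range ℓ, (qFactorial q m)⁻¹ • x ^ m)
      * (∑ m ∈ Finset.range ℓ, (qFactorial q m)⁻¹ • y ^ m)
      = ∑ p ∈ Finset.range ℓ ×ˢ Finset.range ℓ,
          ((qFactorial q p.1)⁻¹ * (qFactorial q p.2)⁻¹) • (x ^ p.1 * y ^ p.2) := by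
    rw [Finset.sum_mul_sum, ← Finset.sum_product']
    apply Finset.sum_congr rfl
    intro p _
    rw [smul_mul_smul_comm]
  rw [lhs_eq, rhs_eq, sum_tri ℓ (fun i j => ((qFactorial q i)⁻¹ * (qFactorial q j)⁻¹)
    • (x ^ i * y ^ j))]
  rw [← Finset.sum_filter_add_sum_filter_not (Finset.range ℓ ×ˢ Finset.range ℓ)
    (fun p => p.1 + p.2 < ℓ)]
  have hzero : ∑ p ∈ (Finset.range ℓ ×ˢ Finset.range ℓ).filter (fun p => ¬ p.1 + p.2 < ℓ),
      ((qFactorial q p.1)⁻¹ * (qFactorial q p.2)⁻¹) • (x ^ p.1 * y ^ p.2) = 0 := by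
    apply Finset.sum_eq_zero
    intro p hp
    simp only [Finset.mem_filter, Finset.mem_product, Finset.mem_range, not_lt] at hp
    obtain ⟨⟨h1, h2⟩, h3⟩ := hp
    have : x ^ p.1 * y ^ p.2 = 0 := by
      have hy : y ^ p.2 = y ^ (ℓ - p.1) * y ^ (p.2 - (ℓ - p.1)) := by
        rw [← pow_add]; congr 1; omega
      rw [hy, ← mul_assoc, hnil p.1 (by omega), zero_mul]
    rw [this, smul_zero]
  rw [hzero, add_zero]
end
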